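/- arXiv:2304.00845 — 4 statements merged into one kernel-verified Lean document; each statement's English description precedes it below -/
import Mathlib

section
/- Let C be a cosilting R-module with torsionfree class F = Cogen(C), and let 0 → C1 → C0 → E(R) be a minimal left F-approximation sequence of an injective cogenerator E(R), with C0, C1 in Prod(C). Then Beta(F) = {}^{⊥0}C1, i.e. a module X satisfies 'every morphism X → F with F in F has torsionfree cokernel' if and only if Hom(X, C1) = 0. In particular, Beta(F) is a torsion class in R-Mod. -/
open CategoryTheory CategoryTheory.Limits

universe u

variable {R : Type u} [Ring R]

/-- `(𝒯, ℱ)` is a torsion pair. -/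
def IsTorsionPair (𝒯 ℱ : Set (ModuleCat.{u} R)) : Prop :=
  (∀ ⦃X Y : ModuleCat.{u} R⦄, X ∈ 𝒯 → Y ∈ ℱ → ∀ f : X ⟶ Y, f = 0) ∧
  (∀ M : ModuleCat.{u} R, ∃ (X Y : ModuleCat.{u} R) (_ : X ∈ 𝒯) (_ : Y ∈ ℱ)
      (i : X ⟶ M) (p : M ⟶ Y) (w : i ≫ p = 0), (ShortComplex.mk i p w).ShortExact)

/-- `Cogen C`: the modules embedding into a product of copies of `C`. -/
def Cogen (C : ModuleCat.{u} R) : Set (ModuleCat.{u} R) :=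
  {X | ∃ (s : Type u) (f : X ⟶ ModuleCat.of R (s → C)), Mono f}

/-- `Prod C`: the direct summands of products of copies of `C`. -/
def ProdCl (C : ModuleCat.{u} R) : Set (ModuleCat.{u} R) :=
  {X | ∃ (s : Type u) (f : X ⟶ ModuleCat.of R (s → C))
      (r : ModuleCat.of R (s → C) ⟶ X), f ≫ r = 𝟙 X}

/-- `C` is a cosilting module: there is an injective copresentation `ω : I₀ ⟶ I₁` of `C`
with `Cogen C = 𝒞_ω = { X | Hom(X, ω) is surjective }`. -/
def IsCosilting (C : ModuleCat.{u} R) : Prop :=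
  ∃ (I₀ I₁ : ModuleCat.{u} R) (_ : Injective I₀) (_ : Injective I₁)
    (ι : C ⟶ I₀) (ω : I₀ ⟶ I₁) (w : ι ≫ ω = 0),
    Mono ι ∧ (ShortComplex.mk ι ω w).Exact ∧
    Cogen C = {X | ∀ f : X ⟶ I₁, ∃ g : X ⟶ I₀, g ≫ ω = f}

/-- `E` is an injective cogenerator. -/
def IsInjectiveCogenerator (E : ModuleCat.{u} R) : Prop :=
  Injective E ∧ ∀ X : ModuleCat.{u} R, ∃ (s : Type u)
    (f : X ⟶ ModuleCat.of R (s → E)), Mono f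

/-- `Beta ℱ`: modules `X` such that every morphism from `X` to an object of `ℱ` has
cokernel in `ℱ`. -/
def Beta (ℱ : Set (ModuleCat.{u} R)) : Set (ModuleCat.{u} R) :=
  {X | ∀ ⦃F : ModuleCat.{u} R⦄, F ∈ ℱ → ∀ f : X ⟶ F, cokernel f ∈ ℱ}

/-!
If `X ∈ Beta ℱ` and `f : X ⟶ C₁`, then `coker (f ≫ j) ∈ ℱ`, so `g` factors through the
projection onto it; minimality of `g` makes that projection a split mono, hence `f = 0`.
Conversely, if `Hom(X, C₁) = 0` and `f : X ⟶ F` with `F ∈ ℱ`, then every map `coker f ⟶ E`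
lifts along `g`: its composite with `coker` lifts to `h : F ⟶ C₀`, and `f ≫ h` factors
through `C₁ = ker g`, so it vanishes and `h` descends to `coker f`.
As `E` cogenerates and `C₀ ∈ Cogen C`, this puts `coker f` in `Cogen C`.

The class `{}^{⊥₀} C₁` is closed under quotients, extensions and sums of submodules, so the sum
of all submodules of `M` lying in it is the torsion part of `M`.
-/

variable (R) in
/-- `A ∈ {}^{⊥₀} N`. -/
def IsLeftPerp (N A : Type*) [AddCommGroup N] [Module R N] [AddCommGroup A] [Module R A] :
    Prop :=
  ∀ φ : A →ₗ[R] N, φ = 0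

namespace IsLeftPerp

variable {N A B : Type*} [AddCommGroup N] [Module R N] [AddCommGroup A] [Module R A]
  [AddCommGroup B] [Module R B]

theorem of_surjective (hA : IsLeftPerp R N A) (q : A →ₗ[R] B) (hq : Function.Surjective q) :
    IsLeftPerp R N B := fun φ =>
  LinearMap.ext fun b => by
    obtain ⟨a, rfl⟩ := hq b
    exact LinearMap.congr_fun (hA (φ ∘ₗ q)) a

theorem of_ker_of_surjective (e : A →ₗ[R] B) (he : Function.Surjective e)
    (hker : IsLeftPerp R N (LinearMap.ker e)) (hB : IsLeftPerp R N B) : IsLeftPerp R N A := by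
  intro φ
  have hle : LinearMap.ker e ≤ LinearMap.ker φ := fun x hx =>
    LinearMap.congr_fun (hker (φ ∘ₗ (LinearMap.ker e).subtype)) ⟨x, hx⟩
  have hfactor : (LinearMap.ker e).liftQ φ hle ∘ₗ
      (e.quotKerEquivOfSurjective he).symm.toLinearMap = 0 := hB _
  ext x
  have := LinearMap.congr_fun hfactor (e x)
  rwa [LinearMap.comp_apply, LinearEquiv.coe_coe,
    LinearMap.quotKerEquivOfSurjective_symm_apply, Submodule.liftQ_apply] at this

theorem sSup {S : Set (Submodule R A)} (hS : ∀ P ∈ S, IsLeftPerp R N P) :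
    IsLeftPerp R N (SupSet.sSup S : Submodule R A) := by
  intro φ
  have hle : SupSet.sSup S ≤ (LinearMap.ker φ).map (SupSet.sSup S).subtype :=
    sSup_le fun P hP x hx => by
      have hPS : P ≤ SupSet.sSup S := le_sSup hP
      exact ⟨⟨x, hPS hx⟩,
        LinearMap.congr_fun (hS P hP (φ ∘ₗ Submodule.inclusion hPS)) ⟨x, hx⟩, rfl⟩
  ext ⟨x, hx⟩
  obtain ⟨y, hy, rfl⟩ := hle hx
  exact hy

end IsLeftPerp

theorem isLeftPerp_iff {N X : ModuleCat.{u} R} : IsLeftPerp R N X ↔ ∀ f : X ⟶ N, f = 0 :=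
  ⟨fun h f => ModuleCat.hom_ext (h f.hom),
    fun h φ => congrArg ModuleCat.Hom.hom (h (ModuleCat.ofHom φ))⟩

theorem isTorsionPair_of_forall_exists_submodule (𝒯 : Set (ModuleCat.{u} R))
    (h : ∀ M : ModuleCat.{u} R, ∃ t : Submodule R M, ModuleCat.of R t ∈ 𝒯 ∧
      ∀ X ∈ 𝒯, ∀ f : X ⟶ ModuleCat.of R (M ⧸ t), f = 0) :
    IsTorsionPair 𝒯 {Y | ∀ X ∈ 𝒯, ∀ f : X ⟶ Y, f = 0} := by
  refine ⟨fun X Y hX hY f => hY X hX f, fun M => ?_⟩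
  obtain ⟨t, ht, hquot⟩ := h M
  have : Mono (ModuleCat.ofHom t.subtype) :=
    (ModuleCat.mono_iff_injective _).2 t.injective_subtype
  have : Epi (ModuleCat.ofHom t.mkQ) :=
    (ModuleCat.epi_iff_surjective _).2 t.mkQ_surjective
  have hzero : ModuleCat.ofHom t.subtype ≫ ModuleCat.ofHom t.mkQ = 0 := by
    ext x
    exact (Submodule.Quotient.mk_eq_zero t).2 x.2
  exact ⟨_, _, ht, hquot, _, _, hzero,
    ⟨ShortComplex.Exact.moduleCat_of_range_eq_ker _ _ (by simp)⟩⟩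

theorem exists_isTorsionPair_leftPerp (N : ModuleCat.{u} R) :
    ∃ 𝒢, IsTorsionPair {X : ModuleCat.{u} R | ∀ f : X ⟶ N, f = 0} 𝒢 := by
  refine ⟨_, isTorsionPair_of_forall_exists_submodule _ fun M => ?_⟩
  set t := sSup {P : Submodule R M | IsLeftPerp R N P}
  have ht : IsLeftPerp R N t := IsLeftPerp.sSup fun _ hP => hP
  refine ⟨t, isLeftPerp_iff.1 ht, fun X hX f => ?_⟩
  set P := (LinearMap.range f.hom).comap t.mkQ
  have hP : IsLeftPerp R N P := by
    have htP : t ≤ P := fun x hx =>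
      ⟨0, by rw [map_zero]; exact ((Submodule.Quotient.mk_eq_zero t).2 hx).symm⟩
    refine .of_ker_of_surjective
      (t.mkQ.restrict (p := P) (q := LinearMap.range f.hom) fun _ hx => hx) ?_ ?_
      ((isLeftPerp_iff.2 hX).of_surjective _ f.hom.surjective_rangeRestrict)
    · rintro ⟨_, z, rfl⟩
      obtain ⟨x, hx⟩ := t.mkQ_surjective (f z)
      exact ⟨⟨x, ⟨z, hx.symm⟩⟩, Subtype.ext hx⟩
    · rw [LinearMap.ker_restrict, Submodule.ker_mkQ]
      exact ht.of_surjective _ (Submodule.comapSubtypeEquivOfLe htP).symm.surjective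
  have hPt : P ≤ t := le_sSup hP
  ext z
  obtain ⟨x, hx⟩ := t.mkQ_surjective (f z)
  rw [← hx]
  exact (Submodule.Quotient.mk_eq_zero t).2 (hPt ⟨z, hx.symm⟩)

theorem mem_cogen_iff_separates (C Y : ModuleCat.{u} R) :
    Y ∈ Cogen C ↔ ∀ y : Y, y ≠ 0 → ∃ φ : Y ⟶ C, φ y ≠ 0 := by
  constructor
  · rintro ⟨s, f, hf⟩ y hy
    have hfy : f y ≠ 0 := fun h =>
      hy ((ModuleCat.mono_iff_injective f).1 hf (by rw [h, map_zero]))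
    obtain ⟨i, hi⟩ := Function.ne_iff.1 hfy
    exact ⟨f ≫ ModuleCat.ofHom (LinearMap.proj i), hi⟩
  · intro h
    refine ⟨Y ⟶ C, ModuleCat.ofHom (LinearMap.pi fun φ => φ.hom), ?_⟩
    rw [ModuleCat.mono_iff_injective, injective_iff_map_eq_zero]
    intro y hy
    by_contra hne
    obtain ⟨φ, hφ⟩ := h y hne
    exact hφ (congrFun hy φ)

theorem mem_cogen_of_forall_factors {C E C₀ Y : ModuleCat.{u} R} (hY : Y ∈ Cogen E)
    (hC₀ : C₀ ∈ Cogen C) (g : C₀ ⟶ E) (hfac : ∀ ψ : Y ⟶ E, ∃ h : Y ⟶ C₀, h ≫ g = ψ) :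
    Y ∈ Cogen C := by
  rw [mem_cogen_iff_separates] at hY hC₀ ⊢
  intro y hy
  obtain ⟨ψ, hψ⟩ := hY y hy
  obtain ⟨h, rfl⟩ := hfac ψ
  obtain ⟨φ, hφ⟩ := hC₀ (h y) fun h0 => hψ (by simp [h0])
  exact ⟨h ≫ φ, hφ⟩

theorem beta_subset_leftPerp {ℱ : Set (ModuleCat.{u} R)} {E C₀ C₁ : ModuleCat.{u} R}
    (g : C₀ ⟶ E) (hC₀ : C₀ ∈ ℱ) (happrox : ∀ F ∈ ℱ, ∀ f : F ⟶ E, ∃ h : F ⟶ C₀, h ≫ g = f)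
    (hmin : ∀ s : C₀ ⟶ C₀, s ≫ g = g → IsIso s) (j : C₁ ⟶ C₀) [Mono j] (hw : j ≫ g = 0) :
    Beta ℱ ⊆ {X | ∀ f : X ⟶ C₁, f = 0} := by
  intro X hX f
  obtain ⟨h, hh⟩ := happrox _ (hX hC₀ (f ≫ j)) (cokernel.desc (f ≫ j) g (by simp [hw]))
  have : IsIso (cokernel.π (f ≫ j) ≫ h) := hmin _ (by simp [hh])
  have : Mono (cokernel.π (f ≫ j)) := mono_of_mono _ h
  have hfj : f ≫ j = 0 := by
    rw [← cancel_mono (cokernel.π (f ≫ j)), cokernel.condition, zero_comp]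
  rwa [← cancel_mono j, zero_comp]

theorem eq_zero_of_comp_eq_zero_of_leftPerp {X C₀ C₁ E : ModuleCat.{u} R}
    (hX : ∀ f : X ⟶ C₁, f = 0) {j : C₁ ⟶ C₀} [Mono j] {g : C₀ ⟶ E} {hw : j ≫ g = 0}
    (hker : (ShortComplex.mk j g hw).Exact)
    (k : X ⟶ C₀) (hk : k ≫ g = 0) : k = 0 := by
  rw [← hker.lift_f k hk, hX (hker.lift k hk), zero_comp]

theorem leftPerp_subset_beta {C E C₀ C₁ : ModuleCat.{u} R}
    (hE : ∀ Y : ModuleCat.{u} R, Y ∈ Cogen E) (g : C₀ ⟶ E) (hC₀ : C₀ ∈ Cogen C)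
    (happrox : ∀ F ∈ Cogen C, ∀ f : F ⟶ E, ∃ h : F ⟶ C₀, h ≫ g = f)
    (j : C₁ ⟶ C₀) [Mono j] (hw : j ≫ g = 0) (hker : (ShortComplex.mk j g hw).Exact) :
    {X | ∀ f : X ⟶ C₁, f = 0} ⊆ Beta (Cogen C) := by
  intro X hX F hF f
  refine mem_cogen_of_forall_factors (hE _) hC₀ g fun ψ => ?_
  obtain ⟨h, hh⟩ := happrox F hF (cokernel.π f ≫ ψ)
  have hfh : f ≫ h = 0 := eq_zero_of_comp_eq_zero_of_leftPerp hX hker _ (by simp [hh])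
  refine ⟨cokernel.desc f h hfh, ?_⟩
  rw [← cancel_epi (cokernel.π f), cokernel.π_desc_assoc, hh]

theorem Beta_eq_perp0_C1_general
    (C E C₀ C₁ : ModuleCat.{u} R)
    (hE : IsInjectiveCogenerator E)
    (g : C₀ ⟶ E) (hC₀F : C₀ ∈ Cogen C)
    (happrox : ∀ F ∈ Cogen C, ∀ f : F ⟶ E, ∃ h : F ⟶ C₀, h ≫ g = f)
    (hmin : ∀ s : C₀ ⟶ C₀, s ≫ g = g → IsIso s)
    (j : C₁ ⟶ C₀) (hj : Mono j) (hw : j ≫ g = 0)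
    (hker : (ShortComplex.mk j g hw).Exact) :
    Beta (Cogen C) = {X | ∀ f : X ⟶ C₁, f = 0} ∧
      ∃ 𝒢 : Set (ModuleCat.{u} R), IsTorsionPair (Beta (Cogen C)) 𝒢 := by
  have hBeta : Beta (Cogen C) = {X | ∀ f : X ⟶ C₁, f = 0} :=
    (beta_subset_leftPerp g hC₀F happrox hmin j hw).antisymm
      (leftPerp_subset_beta hE.2 g hC₀F happrox j hw hker)
  exact ⟨hBeta, hBeta ▸ exists_isTorsionPair_leftPerp C₁⟩

/-- Let `C` be a cosilting module with torsionfree class `ℱ = Cogen C`, and let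
`0 → C₁ → C₀ → E` be a minimal `ℱ`-approximation sequence of an injective cogenerator
`E`, with `C₀, C₁ ∈ Prod C`. Then `Beta ℱ = {}^{⊥₀} C₁`, i.e. `X ∈ Beta ℱ` iff
`Hom(X, C₁) = 0`; in particular `Beta ℱ` is a torsion class. -/
theorem Beta_eq_perp0_C1
    (C E C₀ C₁ : ModuleCat.{u} R) (hC : IsCosilting C)
    (hE : IsInjectiveCogenerator E)
    (g : C₀ ⟶ E) (hC₀F : C₀ ∈ Cogen C)
    (happrox : ∀ F ∈ Cogen C, ∀ f : F ⟶ E, ∃ h : F ⟶ C₀, h ≫ g = f)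
    (hmin : ∀ s : C₀ ⟶ C₀, s ≫ g = g → IsIso s)
    (j : C₁ ⟶ C₀) (hj : Mono j) (hw : j ≫ g = 0)
    (hker : (ShortComplex.mk j g hw).Exact)
    (hC₀ : C₀ ∈ ProdCl C) (hC₁ : C₁ ∈ ProdCl C) :
    Beta (Cogen C) = {X | ∀ f : X ⟶ C₁, f = 0} ∧
      ∃ 𝒢 : Set (ModuleCat.{u} R), IsTorsionPair (Beta (Cogen C)) 𝒢 :=
  Beta_eq_perp0_C1_general C E C₀ C₁ hE g hC₀F happrox hmin j hj hw hker
end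

section
/- Let C be a cosilting R-module with associated torsion pair (T,F) = ({}^{⊥0}C, Cogen C) and approximation sequence 0 → C1 → C0 → E(R) as above. Then Alpha(T) = C_σ, where σ : I0 → I1 is a minimal injective copresentation of C0 and C_σ = { X | Hom(X,σ) is surjective }. Here Alpha(T) = { X | every morphism f : T → X with T in T has ker(f) in T }. -/
open CategoryTheory CategoryTheory.Limits

universe u

variable {R : Type u} [Ring R]

/-- `Alpha 𝒯`: objects `X` such that every morphism from an object of `𝒯` to `X` has
kernel in `𝒯`. -/
def Alpha (𝒯 : Set (ModuleCat.{u} R)) : Set (ModuleCat.{u} R) :=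
  {X | ∀ ⦃T : ModuleCat.{u} R⦄, T ∈ 𝒯 → ∀ f : T ⟶ X, kernel f ∈ 𝒯}

/-- `f` is an essential monomorphism. -/
def EssentialMono {X Y : ModuleCat.{u} R} (f : X ⟶ Y) : Prop :=
  Mono f ∧ ∀ ⦃Z : ModuleCat.{u} R⦄ (h : Y ⟶ Z), Mono (f ≫ h) → Mono h

/-!
Write `σ = cokernel.π ι ≫ e`, so that `0 → C₀ → I₀ → I₁` is exact. If `Hom(X, σ)` is surjective,
then for every exact `0 → K → T → X` each map `K → C₀` extends to `T`: extend it to `T → I₀`,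
push the resulting obstruction down to `X → I₁`, lift it through `σ` and correct. For `K = ker f`
with `T` torsion, `Hom(T, C₀) = 0` then gives `Hom(K, C₀) = 0`, hence `Hom(K, C) = 0` because
`C ∈ Cogen C₀`. The same extension property for the cosilting copresentation `ω` of `C` shows
that the reject of `C` in any module `M`, the kernel of `M → C ^ Hom(M, C)`, is torsion.

Conversely, let `X ∈ Alpha 𝒯`, `u : X → I₁`, and `W` the pullback of `u` and `σ`, with `C₀` as
kernel of `W → X`. The torsion part `tW` meets `C₀` in the kernel of `tW → X`, which is torsion
since `X ∈ Alpha 𝒯` and lies in `C₀ ∈ Cogen C`, so it vanishes. Hence `C₀ → W → C ^ Hom(W, C)`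
is a monomorphism into `Cogen C`, and it splits by minimality of the approximation `g`. The
retraction corrects the projection `W → I₀` to a map vanishing on `C₀`; it descends to
`v : X → I₀` with `v ≫ σ = u` on the image of `W`, i.e. wherever `u` lands in `im σ = im e`.
So the image of `u - v ≫ σ` meets the essential submodule `im e` trivially, and `u = v ≫ σ`.
-/

section Abelian

variable {𝒜 : Type*} [Category 𝒜] [Abelian 𝒜]

lemma exact_cokernel_π_comp {N I₀ I₁ : 𝒜} (ι : N ⟶ I₀) (e : cokernel ι ⟶ I₁) [Mono e] :
    (ShortComplex.mk ι (cokernel.π ι ≫ e) (by simp)).Exact :=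
  (ShortComplex.exact_iff_of_epi_of_isIso_of_mono
    (S₁ := ShortComplex.mk ι (cokernel.π ι) (cokernel.condition ι))
    { τ₁ := 𝟙 N, τ₂ := 𝟙 I₀, τ₃ := e }).1
    (ShortComplex.exact_of_g_is_cokernel _ (cokernelIsCokernel ι))

lemma CategoryTheory.ShortComplex.Exact.exists_f_comp_eq_of_lifts {S : ShortComplex 𝒜}
    (hS : S.Exact) [Mono S.f] {N I₀ I₁ : 𝒜} [Injective I₀] [Injective I₁] {ι : N ⟶ I₀} {σ : I₀ ⟶ I₁}
    [Mono ι] {w : ι ≫ σ = 0} (hσ : (ShortComplex.mk ι σ w).Exact)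
    (hX : ∀ f : S.X₃ ⟶ I₁, ∃ h : S.X₃ ⟶ I₀, h ≫ σ = f) (h : S.X₁ ⟶ N) :
    ∃ D : S.X₂ ⟶ N, S.f ≫ D = h := by
  let H := Injective.factorThru (h ≫ ι) S.f
  have hH : S.f ≫ H = h ≫ ι := Injective.comp_factorThru _ _
  obtain ⟨v, hv⟩ := hX (hS.descToInjective (H ≫ σ) (by rw [reassoc_of% hH, w, comp_zero]))
  have hD : (H - S.g ≫ v) ≫ σ = 0 := by simp [hv]
  refine ⟨hσ.lift _ hD, ?_⟩
  have hl : hσ.lift _ hD ≫ ι = H - S.g ≫ v := hσ.lift_f _ hD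
  rw [← cancel_mono ι, Category.assoc, hl]
  simp [hH]

lemma exists_exact_pullback_fst {N I₀ I₁ X : 𝒜} {ι : N ⟶ I₀} {σ : I₀ ⟶ I₁} [Mono ι]
    {w : ι ≫ σ = 0} (hσ : (ShortComplex.mk ι σ w).Exact) (u : X ⟶ I₁) :
    ∃ (k : N ⟶ pullback u σ) (wk : k ≫ pullback.fst u σ = 0), Mono k ∧
      k ≫ pullback.snd u σ = ι ∧ (ShortComplex.mk k (pullback.fst u σ) wk).Exact := by
  refine ⟨pullback.lift 0 ι (by simp [w]), pullback.lift_fst _ _ _,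
    mono_of_mono_fac (pullback.lift_snd _ _ _), pullback.lift_snd _ _ _, ?_⟩
  have hsnd : ∀ {Z : 𝒜} (a : Z ⟶ pullback u σ), a ≫ pullback.fst u σ = 0 →
      (a ≫ pullback.snd u σ) ≫ σ = 0 := fun a ha => by
    rw [Category.assoc, ← pullback.condition, reassoc_of% ha, zero_comp]
  have hl : ∀ {Z : 𝒜} (a : Z ⟶ pullback u σ) (ha : a ≫ pullback.fst u σ = 0),
      hσ.lift _ (hsnd a ha) ≫ ι = a ≫ pullback.snd u σ := fun a ha => hσ.lift_f _ _
  refine ShortComplex.exact_of_f_is_kernel _ (KernelFork.IsLimit.ofι _ _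
    (fun a ha => hσ.lift _ (hsnd a ha)) (fun a ha => ?_) (fun a ha m hm => ?_))
  · apply pullback.hom_ext
    · rw [Category.assoc, pullback.lift_fst, comp_zero]
      exact ha.symm
    · rw [Category.assoc, pullback.lift_snd]
      exact hl a ha
  · rw [← cancel_mono ι, hl a ha, ← hm, Category.assoc]
    exact congrArg (m ≫ ·) (pullback.lift_snd _ _ _).symm

lemma mono_comp_of_hom_kernel_eq_zero {A B W X Q : 𝒜} {k : A ⟶ W} {p : W ⟶ X} {t : B ⟶ W}
    {π : W ⟶ Q} [Mono k] [Mono t] {wk : k ≫ p = 0} {wt : t ≫ π = 0}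
    (hk : (ShortComplex.mk k p wk).Exact) (ht : (ShortComplex.mk t π wt).Exact)
    (hK : ∀ ψ : kernel (t ≫ p) ⟶ A, ψ = 0) : Mono (k ≫ π) := by
  have hKt : kernel.ι (t ≫ p) ≫ t = 0 := by
    have := hk.lift_f (kernel.ι (t ≫ p) ≫ t) (by simp)
    rw [hK (hk.lift _ _), zero_comp] at this
    exact this.symm
  refine Preadditive.mono_of_cancel_zero _ fun n hn => ?_
  have hm : ht.lift (n ≫ k) _ ≫ t = n ≫ k := ht.lift_f (n ≫ k) (by simpa using hn)
  have hmp : ht.lift (n ≫ k) (by simpa using hn) ≫ t ≫ p = 0 := by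
    rw [reassoc_of% hm]
    simp [wk]
  rw [← cancel_mono k, zero_comp, ← hm, ← kernel.lift_ι (t ≫ p) _ hmp, Category.assoc, hKt,
    comp_zero]

end Abelian

lemma isSplitMono_of_minimal_approximation {𝒞 : Type*} [Category 𝒞] {ℱ : Set 𝒞} {C₀ E : 𝒞}
    [Injective E] {g : C₀ ⟶ E} (happrox : ∀ F ∈ ℱ, ∀ f : F ⟶ E, ∃ h : F ⟶ C₀, h ≫ g = f)
    (hmin : ∀ s : C₀ ⟶ C₀, s ≫ g = g → IsIso s) {M : 𝒞} (hM : M ∈ ℱ) (μ : C₀ ⟶ M) [Mono μ] :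
    IsSplitMono μ := by
  obtain ⟨h, hh⟩ := happrox M hM (Injective.factorThru g μ)
  have := hmin (μ ≫ h) (by rw [Category.assoc, hh, Injective.comp_factorThru])
  exact IsSplitMono.mk' ⟨h ≫ inv (μ ≫ h), by rw [← Category.assoc, IsIso.hom_inv_id]⟩

lemma hom_eq_zero_of_mem_cogen {C T A : ModuleCat.{u} R} (hT : ∀ f : T ⟶ C, f = 0)
    (hA : A ∈ Cogen C) (φ : T ⟶ A) : φ = 0 := by
  obtain ⟨s, m, _⟩ := hA
  rw [← cancel_mono m, zero_comp]
  ext x i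
  exact ConcreteCategory.congr_hom (hT (φ ≫ m ≫ ModuleCat.ofHom (LinearMap.proj i))) x

lemma pi_mem_cogen (s : Type u) (C : ModuleCat.{u} R) : ModuleCat.of R (s → C) ∈ Cogen C :=
  ⟨s, 𝟙 _, inferInstance⟩

lemma self_mem_cogen (C : ModuleCat.{u} R) : C ∈ Cogen C :=
  ⟨PUnit, ModuleCat.ofHom (LinearMap.pi fun _ => LinearMap.id),
    (ModuleCat.mono_iff_injective _).2 fun _ _ h => congrFun h PUnit.unit⟩

lemma cogen_subset_cogen_of_approximation {C C₀ E : ModuleCat.{u} R}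
    (hE : IsInjectiveCogenerator E) {g : C₀ ⟶ E}
    (happrox : ∀ F ∈ Cogen C, ∀ f : F ⟶ E, ∃ h : F ⟶ C₀, h ≫ g = f) :
    Cogen C ⊆ Cogen C₀ := by
  intro A hA
  obtain ⟨s, m, hm⟩ := hE.2 A
  choose h hh using fun i : s => happrox A hA (m ≫ ModuleCat.ofHom (LinearMap.proj i))
  refine ⟨s, ModuleCat.ofHom (LinearMap.pi fun i => (h i).hom),
    (ModuleCat.mono_iff_injective _).2 fun a b hab => ?_⟩
  refine (ModuleCat.mono_iff_injective m).1 hm (funext fun i => ?_)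
  exact (ConcreteCategory.congr_hom (hh i) a).symm.trans
    ((congrArg g (congrFun hab i)).trans (ConcreteCategory.congr_hom (hh i) b))

def toPiHom (C M : ModuleCat.{u} R) : M →ₗ[R] ((M ⟶ C) → C) :=
  LinearMap.pi fun f => f.hom

abbrev rejectComplex (C M : ModuleCat.{u} R) : ShortComplex (ModuleCat.{u} R) :=
  (toPiHom C M).shortComplexKer

lemma rejectComplex_exact (C M : ModuleCat.{u} R) : (rejectComplex C M).Exact :=
  ModuleCat.shortComplex_exact _ (LinearMap.exact_subtype_ker_map _)

instance (C M : ModuleCat.{u} R) : Mono (rejectComplex C M).f :=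
  (ModuleCat.mono_iff_injective _).2 (Submodule.injective_subtype _)

lemma rejectComplex_X₁_hom_eq_zero {C : ModuleCat.{u} R} (hC : IsCosilting C)
    (M : ModuleCat.{u} R) (h : (rejectComplex C M).X₁ ⟶ C) : h = 0 := by
  obtain ⟨J₀, J₁, _, _, ι, ω, w, _, hω, hcog⟩ := hC
  have hX₃ : (rejectComplex C M).X₃ ∈ {X | ∀ f : X ⟶ J₁, ∃ g : X ⟶ J₀, g ≫ ω = f} :=
    hcog ▸ pi_mem_cogen _ C
  obtain ⟨D, rfl⟩ := (rejectComplex_exact C M).exists_f_comp_eq_of_lifts hω hX₃ h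
  ext ⟨x, hx⟩
  exact congrFun (LinearMap.mem_ker.1 hx) D

lemma eq_zero_of_essentialMono {K I X : ModuleCat.{u} R} {e : K ⟶ I} (he : EssentialMono e)
    (f : X ⟶ I) (hf : ∀ x k, f x = e k → f x = 0) : f = 0 := by
  let q := ModuleCat.ofHom (LinearMap.range f.hom).mkQ
  have : Mono (e ≫ q) := by
    rw [ModuleCat.mono_iff_injective, injective_iff_map_eq_zero (e ≫ q).hom]
    intro k hk
    obtain ⟨x, hx⟩ := (Submodule.Quotient.mk_eq_zero _).1 hk
    have := hf x k hx
    exact (ModuleCat.mono_iff_injective e).1 he.1 ((hx.symm.trans this).trans (map_zero _).symm)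
  have hq := (ModuleCat.mono_iff_injective q).1 (he.2 q this)
  ext x
  apply hq
  simp [q]

lemma comp_eq_of_pullback_fst_comp_eq {K I₀ I₁ X : ModuleCat.{u} R} {π : I₀ ⟶ K} [Epi π]
    {e : K ⟶ I₁} (he : EssentialMono e) {u : X ⟶ I₁} {v : X ⟶ I₀}
    (h : pullback.fst u (π ≫ e) ≫ v ≫ π ≫ e = pullback.fst u (π ≫ e) ≫ u) :
    v ≫ π ≫ e = u := by
  rw [← sub_eq_zero]
  refine eq_zero_of_essentialMono he _ fun x k hk => ?_
  obtain ⟨i, rfl⟩ := (ModuleCat.epi_iff_surjective π).1 ‹_› k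
  have hx : u x = (π ≫ e) (v x - i) := by
    have hk' : e (π (v x)) - u x = e (π i) := hk
    rw [map_sub]
    change u x = e (π (v x)) - e (π i)
    rw [← hk', sub_sub_cancel]
  have := ConcreteCategory.congr_hom h (Concrete.pullbackMk u (π ≫ e) x (v x - i) hx)
  simpa [sub_eq_zero] using this

lemma exists_lift_of_mem_Alpha {C E C₀ I₀ I₁ : ModuleCat.{u} R} (hC : IsCosilting C)
    [Injective E] {g : C₀ ⟶ E} (hC₀F : C₀ ∈ Cogen C)
    (happrox : ∀ F ∈ Cogen C, ∀ f : F ⟶ E, ∃ h : F ⟶ C₀, h ≫ g = f)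
    (hmin : ∀ s : C₀ ⟶ C₀, s ≫ g = g → IsIso s) [Injective I₀] {ι : C₀ ⟶ I₀} [Mono ι]
    {e : cokernel ι ⟶ I₁} (he : EssentialMono e) {X : ModuleCat.{u} R}
    (hX : X ∈ Alpha {M | ∀ f : M ⟶ C, f = 0}) (u : X ⟶ I₁) :
    ∃ v : X ⟶ I₀, v ≫ cokernel.π ι ≫ e = u := by
  have := he.1
  obtain ⟨k, wk, _, hkι, hk⟩ := exists_exact_pullback_fst (exact_cokernel_π_comp ι e) u
  let S := rejectComplex C (pullback u (cokernel.π ι ≫ e))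
  have : Mono (k ≫ S.g) :=
    mono_comp_of_hom_kernel_eq_zero hk (rejectComplex_exact _ _) fun ψ =>
      hom_eq_zero_of_mem_cogen (hX (rejectComplex_X₁_hom_eq_zero hC _) _) hC₀F ψ
  have := isSplitMono_of_minimal_approximation happrox hmin (pi_mem_cogen _ C) (k ≫ S.g)
  let θ := pullback.snd _ _ - S.g ≫ retraction (k ≫ S.g) ≫ ι
  have hkθ : k ≫ θ = 0 := by
    simp only [θ, Preadditive.comp_sub, hkι, ← Category.assoc k, IsSplitMono.id_assoc, sub_self]
  have hΛ : pullback.fst u _ ≫ hk.descToInjective θ hkθ = θ := hk.comp_descToInjective θ hkθ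
  refine ⟨hk.descToInjective θ hkθ, comp_eq_of_pullback_fst_comp_eq he ?_⟩
  rw [reassoc_of% hΛ]
  simp [θ, pullback.condition]

lemma mem_Alpha_of_lifts {C E C₀ I₀ I₁ : ModuleCat.{u} R} (hE : IsInjectiveCogenerator E)
    {g : C₀ ⟶ E} (happrox : ∀ F ∈ Cogen C, ∀ f : F ⟶ E, ∃ h : F ⟶ C₀, h ≫ g = f)
    (hC₀F : C₀ ∈ Cogen C) [Injective I₀] [Injective I₁] {ι : C₀ ⟶ I₀} {σ : I₀ ⟶ I₁} [Mono ι]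
    {w : ι ≫ σ = 0} (hσ : (ShortComplex.mk ι σ w).Exact) {X : ModuleCat.{u} R}
    (hX : ∀ f : X ⟶ I₁, ∃ h : X ⟶ I₀, h ≫ σ = f) :
    X ∈ Alpha {M | ∀ f : M ⟶ C, f = 0} := by
  intro T hT f
  have hf : (ShortComplex.mk (kernel.ι f) f (kernel.condition f)).Exact :=
    ShortComplex.exact_of_f_is_kernel _ (kernelIsKernel f)
  have hK : ∀ h : kernel f ⟶ C₀, h = 0 := fun h => by
    obtain ⟨D, rfl⟩ := hf.exists_f_comp_eq_of_lifts hσ hX h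
    rw [hom_eq_zero_of_mem_cogen hT hC₀F D, comp_zero]
  exact hom_eq_zero_of_mem_cogen hK
    (cogen_subset_cogen_of_approximation hE happrox (self_mem_cogen C))

theorem Alpha_eq_C_sigma_general
    (C E C₀ : ModuleCat.{u} R) (hC : IsCosilting C)
    (hE : IsInjectiveCogenerator E)
    (g : C₀ ⟶ E) (hC₀F : C₀ ∈ Cogen C)
    (happrox : ∀ F ∈ Cogen C, ∀ f : F ⟶ E, ∃ h : F ⟶ C₀, h ≫ g = f)
    (hmin : ∀ s : C₀ ⟶ C₀, s ≫ g = g → IsIso s)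
    -- minimal injective copresentation `σ : I₀ ⟶ I₁` of `C₀`
    (I₀ I₁ : ModuleCat.{u} R) (hI₀ : Injective I₀) (hI₁ : Injective I₁)
    (ι : C₀ ⟶ I₀) (hι : EssentialMono ι)
    (e : cokernel ι ⟶ I₁) (he : EssentialMono e) :
    Alpha {M | ∀ f : M ⟶ C, f = 0} =
      {X | ∀ f : X ⟶ I₁, ∃ h : X ⟶ I₀, h ≫ (cokernel.π ι ≫ e) = f} := by
  have := hE.1
  have := hι.1
  have := he.1
  ext X
  exact ⟨exists_lift_of_mem_Alpha hC hC₀F happrox hmin he,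
    mem_Alpha_of_lifts hE happrox hC₀F (exact_cokernel_π_comp ι e)⟩

/-- Let `C` be a cosilting module with torsion class `𝒯 = {}^{⊥₀}C` and approximation
sequence `0 → C₁ → C₀ → E`.  If `σ : I₀ ⟶ I₁` is a minimal injective copresentation of
`C₀`, then `Alpha 𝒯 = 𝒞_σ = { X | Hom(X, σ) is surjective }`. -/
theorem Alpha_eq_C_sigma
    (C E C₀ C₁ : ModuleCat.{u} R) (hC : IsCosilting C)
    (hE : IsInjectiveCogenerator E)
    (g : C₀ ⟶ E) (hC₀F : C₀ ∈ Cogen C)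
    (happrox : ∀ F ∈ Cogen C, ∀ f : F ⟶ E, ∃ h : F ⟶ C₀, h ≫ g = f)
    (hmin : ∀ s : C₀ ⟶ C₀, s ≫ g = g → IsIso s)
    (j : C₁ ⟶ C₀) (hj : Mono j) (hw : j ≫ g = 0)
    (hker : (ShortComplex.mk j g hw).Exact)
    (hC₀ : C₀ ∈ ProdCl C) (hC₁ : C₁ ∈ ProdCl C)
    -- minimal injective copresentation `σ : I₀ ⟶ I₁` of `C₀`
    (I₀ I₁ : ModuleCat.{u} R) (hI₀ : Injective I₀) (hI₁ : Injective I₁)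
    (ι : C₀ ⟶ I₀) (hι : EssentialMono ι)
    (e : cokernel ι ⟶ I₁) (he : EssentialMono e) :
    Alpha {M | ∀ f : M ⟶ C, f = 0} =
      {X | ∀ f : X ⟶ I₁, ∃ h : X ⟶ I₀, h ≫ (cokernel.π ι ≫ e) = f} :=
  Alpha_eq_C_sigma_general C E C₀ hC hE g hC₀F happrox hmin I₀ I₁ hI₀ hI₁ ι hι e he
end

section
/- Let Λ be the Kronecker algebra over an algebraically closed field k and let I, J ⊆ k be two infinite disjoint subsets. Then Hom_Λ(P(I), P(J)) = 0, where P(I) is the subrepresentation (V(I) ⇉ V(I)+k·1) of the generic representation (k(T) ⇉ k(T)). -/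
universe u

variable (k : Type u) [Field k]

/-- A representation of the Kronecker quiver `0 ⇉ 1`: two vector spaces and two
linear maps. -/
structure KronRep where
  V : Type u
  W : Type u
  [addV : AddCommGroup V]
  [addW : AddCommGroup W]
  [modV : Module k V]
  [modW : Module k W]
  a : V →ₗ[k] W
  b : V →ₗ[k] W

attribute [instance] KronRep.addV KronRep.addW KronRep.modV KronRep.modW

variable {k}

/-- A morphism of Kronecker representations. -/
@[ext]
structure KronHom (M N : KronRep k) where
  φ : M.V →ₗ[k] N.V
  ψ : M.W →ₗ[k] N.W
  comm_a : N.a.comp φ = ψ.comp M.a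
  comm_b : N.b.comp φ = ψ.comp M.b

/-- The zero morphism. -/
def KronHom.zero (M N : KronRep k) : KronHom M N :=
  ⟨0, 0, by simp, by simp⟩

/-- The identity morphism. -/
def KronHom.id (M : KronRep k) : KronHom M M :=
  ⟨LinearMap.id, LinearMap.id, by simp, by simp⟩

/-- `M` is the zero representation. -/
def KronRep.IsZeroRep (M : KronRep k) : Prop :=
  Subsingleton M.V ∧ Subsingleton M.W

/-- `M` is indecomposable: it is nonzero and its endomorphism ring has no nontrivial
idempotents. -/
def KronRep.Indecomposable (M : KronRep k) : Prop :=
  ¬ M.IsZeroRep ∧ ∀ e : KronHom M M,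
    e.φ.comp e.φ = e.φ → e.ψ.comp e.ψ = e.ψ → e = KronHom.zero M M ∨ e = KronHom.id M

/-- For Kronecker representations, the finite-dimensional indecomposable preprojective
modules are exactly the indecomposables of dimension vector `(n, n+1)`. -/
def KronRep.IsPreprojective (M : KronRep k) : Prop :=
  M.Indecomposable ∧ ∃ n : ℕ, Module.finrank k M.V = n ∧ Module.finrank k M.W = n + 1

variable (k)

/-- The subspace `V(I) ⊆ k(T)` spanned by the elements `1/(T - λ)`, `λ ∈ I`. -/
noncomputable def VI (I : Set k) : Submodule k (RatFunc k) :=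
  Submodule.span k ((fun l : k => (RatFunc.X - RatFunc.C l)⁻¹) '' I)

/-- The subspace `V(I) + k·1 ⊆ k(T)`. -/
noncomputable def WI (I : Set k) : Submodule k (RatFunc k) :=
  VI k I ⊔ Submodule.span k {1}

theorem mulX_mem (I : Set k) : ∀ v : RatFunc k, v ∈ VI k I →
    RatFunc.X * v ∈ WI k I := by
  intro v hv
  induction hv using Submodule.span_induction with
  | mem x hx =>
      obtain ⟨l, hl, rfl⟩ := hx
      have hne : (RatFunc.X - RatFunc.C l : RatFunc k) ≠ 0 := by
        have h1 : (RatFunc.X - RatFunc.C l : RatFunc k)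
            = algebraMap (Polynomial k) (RatFunc k) (Polynomial.X - Polynomial.C l) := by
          simp [RatFunc.algebraMap_X, RatFunc.algebraMap_C]
        rw [h1]
        exact RatFunc.algebraMap_ne_zero (Polynomial.X_sub_C_ne_zero l)
      have key : RatFunc.X * (RatFunc.X - RatFunc.C l)⁻¹
          = l • (RatFunc.X - RatFunc.C l)⁻¹ + 1 := by
        rw [Algebra.smul_def]
        field_simp
        rw [RatFunc.algebraMap_eq_C]; ring
      rw [key]
      refine add_mem ?_ ?_
      · exact Submodule.mem_sup_left (Submodule.smul_mem _ _
          (Submodule.subset_span ⟨l, hl, rfl⟩))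
      · exact Submodule.mem_sup_right (Submodule.subset_span rfl)
  | zero => simpa using (WI k I).zero_mem
  | add x y hx hy ihx ihy => simpa [mul_add] using add_mem ihx ihy
  | smul c x hx ih => simpa [Algebra.mul_smul_comm] using (WI k I).smul_mem c ih

/-- Ringel's representation `P(I)`: the subrepresentation `(V(I) ⇉ V(I) + k·1)` of the
generic representation `(k(T) ⇉ k(T))`, whose maps are the inclusion and
multiplication by `T`. -/
noncomputable def Prep (I : Set k) : KronRep k where
  V := VI k I
  W := WI k I
  a := Submodule.inclusion le_sup_left
  b := LinearMap.codRestrict (WI k I)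
    ((LinearMap.mulLeft k (RatFunc.X : RatFunc k)).comp (VI k I).subtype)
    (fun v => mulX_mem k I v v.2)

/-! For `f = (φ, ψ) : P(I) → P(J)` put `g = ψ 1`. Since `T/(T-λ) = λ/(T-λ) + 1`, compatibility
with the two arrows gives `(T - λ) · φ(1/(T-λ)) = g` for every `λ ∈ I`. For `λ ∉ J` every element
of `V(J)` is regular at `λ`, so evaluating at `λ` shows `g(λ) = 0`; as `I` is infinite and disjoint
from `J`, `g = 0`. Then `φ` kills the spanning vectors `1/(T-λ)` of `V(I)`, so `φ = 0`, and `ψ = 0`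
because `V(I) + k·1` is spanned by `V(I)` and `1`. -/

open Polynomial

namespace RatFunc

variable {K : Type u} [Field K]

lemma X_sub_C_eq_algebraMap (l : K) :
    (X - C l : RatFunc K) = algebraMap K[X] (RatFunc K) (Polynomial.X - Polynomial.C l) := by
  simp [algebraMap_X, algebraMap_C]

lemma X_sub_C_ne_zero (l : K) : (X - C l : RatFunc K) ≠ 0 := by
  rw [X_sub_C_eq_algebraMap]
  exact algebraMap_ne_zero (Polynomial.X_sub_C_ne_zero l)

noncomputable def regularAt (l : K) : Submodule K (RatFunc K) where
  carrier := {f | f.denom.eval l ≠ 0}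
  zero_mem' := by simp
  add_mem' {x y} hx hy h0 := by
    have := eval_eq_zero_of_dvd_of_eval_eq_zero (denom_add_dvd x y) h0
    exact mul_ne_zero hx hy (by rwa [Polynomial.eval_mul] at this)
  smul_mem' c x hx h0 := by
    rw [smul_eq_C_mul] at h0
    have := eval_eq_zero_of_dvd_of_eval_eq_zero (denom_mul_dvd _ x) h0
    rw [denom_C, one_mul] at this
    exact hx this

lemma inv_X_sub_C_mem_regularAt {l m : K} (hml : m ≠ l) : (X - C m)⁻¹ ∈ regularAt l := by
  intro h0
  have hdvd : denom (X - C m : RatFunc K)⁻¹ ∣ Polynomial.X - Polynomial.C m := by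
    rw [X_sub_C_eq_algebraMap, ← one_div, ← map_one (algebraMap K[X] (RatFunc K))]
    exact denom_div_dvd 1 _
  have := eval_eq_zero_of_dvd_of_eval_eq_zero hdvd h0
  simp only [Polynomial.eval_sub, Polynomial.eval_X, Polynomial.eval_C, sub_eq_zero] at this
  exact hml this.symm

lemma isRoot_num_of_X_sub_C_mul_eq {l : K} {w g : RatFunc K} (hw : w ∈ regularAt l)
    (h : (X - C l) * w = g) : g.num.IsRoot l := by
  have key := num_denom_mul (X - C l : RatFunc K) w
  rw [h, X_sub_C_eq_algebraMap, num_algebraMap, denom_algebraMap] at key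
  have := congrArg (Polynomial.eval l) key
  simp only [Polynomial.eval_mul, Polynomial.eval_sub, Polynomial.eval_X, Polynomial.eval_C,
    sub_self, zero_mul, one_mul] at this
  exact (mul_eq_zero.mp this).resolve_right hw

end RatFunc

section

variable {k}

lemma VI_le_regularAt {J : Set k} {l : k} (hl : l ∉ J) : VI k J ≤ RatFunc.regularAt l :=
  Submodule.span_le.mpr <| by
    rintro _ ⟨m, hm, rfl⟩
    exact RatFunc.inv_X_sub_C_mem_regularAt fun h => hl (h ▸ hm)

namespace Prep

variable {I : Set k}

noncomputable def gen {l : k} (hl : l ∈ I) : (Prep k I).V :=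
  ⟨(RatFunc.X - RatFunc.C l)⁻¹, Submodule.subset_span ⟨l, hl, rfl⟩⟩

variable (I) in
lemma span_range_gen : Submodule.span k (Set.range fun l : I => gen l.2) = ⊤ := by
  refine eq_top_iff.mpr ((Submodule.span_span_coe_preimage (R := k)).symm.le.trans
    (Submodule.span_mono ?_))
  rintro v ⟨l, hl, hv⟩
  exact ⟨⟨l, hl⟩, Subtype.ext hv⟩

variable (I) in
noncomputable def one : (Prep k I).W :=
  ⟨1, Submodule.mem_sup_right (Submodule.subset_span rfl)⟩

lemma exists_eq_a_add_smul_one (w : (Prep k I).W) :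
    ∃ (v : (Prep k I).V) (c : k), w = (Prep k I).a v + c • one I := by
  obtain ⟨v, hv, s, hs, hw⟩ := Submodule.mem_sup.mp w.2
  obtain ⟨c, rfl⟩ := Submodule.mem_span_singleton.mp hs
  exact ⟨⟨v, hv⟩, c, Subtype.ext hw.symm⟩

lemma coe_b_sub_smul_a (v : (Prep k I).V) (c : k) :
    ((Prep k I).b v - c • (Prep k I).a v).val = (RatFunc.X - RatFunc.C c) * v.val := by
  change RatFunc.X * v.val - c • v.val = _
  rw [Algebra.smul_def, RatFunc.algebraMap_eq_C, sub_mul]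

lemma b_gen_sub_smul_a_gen {l : k} (hl : l ∈ I) :
    (Prep k I).b (gen hl) - l • (Prep k I).a (gen hl) = one I :=
  Subtype.ext <| by
    rw [coe_b_sub_smul_a]
    exact mul_inv_cancel₀ (RatFunc.X_sub_C_ne_zero l)

end Prep

namespace KronHom

lemma a_φ {M N : KronRep k} (f : KronHom M N) (v : M.V) : N.a (f.φ v) = f.ψ (M.a v) :=
  LinearMap.congr_fun f.comm_a v

lemma b_φ {M N : KronRep k} (f : KronHom M N) (v : M.V) : N.b (f.φ v) = f.ψ (M.b v) :=
  LinearMap.congr_fun f.comm_b v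

variable {I J : Set k} (f : KronHom (Prep k I) (Prep k J))

lemma X_sub_C_mul_φ_gen {l : k} (hl : l ∈ I) :
    (RatFunc.X - RatFunc.C l) * (f.φ (Prep.gen hl)).val = (f.ψ (Prep.one I)).val := by
  rw [← Prep.coe_b_sub_smul_a, b_φ, a_φ, ← map_smul, ← map_sub, Prep.b_gen_sub_smul_a_gen]

lemma ψ_one_eq_zero (hI : I.Infinite) (hIJ : Disjoint I J) : f.ψ (Prep.one I) = 0 := by
  refine Subtype.ext (RatFunc.num_eq_zero_iff.mp (eq_zero_of_infinite_isRoot _ (hI.mono ?_)))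
  intro l hl
  exact RatFunc.isRoot_num_of_X_sub_C_mul_eq
    (VI_le_regularAt (hIJ.notMem_of_mem_left hl) (f.φ (Prep.gen hl)).2) (f.X_sub_C_mul_φ_gen hl)

lemma φ_eq_zero (hψ : f.ψ (Prep.one I) = 0) : f.φ = 0 :=
  LinearMap.ext_on (Prep.span_range_gen I) <| by
    rintro _ ⟨⟨l, hl⟩, rfl⟩
    have := f.X_sub_C_mul_φ_gen hl
    rw [hψ] at this
    exact Subtype.ext ((mul_eq_zero.mp this).resolve_left (RatFunc.X_sub_C_ne_zero l))

lemma ψ_eq_zero (hφ : f.φ = 0) (hψ : f.ψ (Prep.one I) = 0) : f.ψ = 0 := by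
  ext1 w
  obtain ⟨v, c, rfl⟩ := Prep.exists_eq_a_add_smul_one w
  rw [map_add, map_smul, ← a_φ, hφ, hψ]
  simp

end KronHom

end

theorem hom_Prep_Prep_eq_zero_of_infinite_disjoint
    (I J : Set k) (hI : I.Infinite)
    (hdisj : Disjoint I J) :
    ∀ f : KronHom (Prep k I) (Prep k J), f = KronHom.zero _ _ := by
  intro f
  have hψ_one := f.ψ_one_eq_zero hI hdisj
  have hφ := f.φ_eq_zero hψ_one
  exact KronHom.ext hφ (f.ψ_eq_zero hφ hψ_one)
end

section
/- Let R be a ring and let C be a cotilting module of injective dimension at most one, i.e. Cogen(C) = {}^{⊥1}C. Let 0 → C1 → C0 → E(R) → 0 be a minimal approximation sequence of an injective cogenerator with C0, C1 ∈ Prod(C), and suppose the module C0 is itself cotilting. If moreover C is a minimal cosilting module (so that beta(Cogen C) is closed under products and Hom(C0,C1)=0), then C1 = 0. -/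
open CategoryTheory CategoryTheory.Limits

universe u

variable {R : Type u} [Ring R]

/-- `Ext¹(X, C) = 0`: every short exact sequence `0 → C → E → X → 0` splits. -/
def Ext1Vanishes (X C : ModuleCat.{u} R) : Prop :=
  ∀ ⦃E : ModuleCat.{u} R⦄ (i : C ⟶ E) (p : E ⟶ X) (w : i ≫ p = 0),
    (ShortComplex.mk i p w).ShortExact → ∃ r : E ⟶ C, i ≫ r = 𝟙 C

/-- `C` is a cotilting module of injective dimension at most one:
`Cogen C = {}^{⊥₁}C`. -/
def IsCotilting (C : ModuleCat.{u} R) : Prop :=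
  Cogen C = {X | Ext1Vanishes X C}

/-!
As `C₀ ∈ Prod C` and both modules are cotilting, `Cogen C₀ = Cogen C =: ℱ`. Every map
`C₀ ⟶ F` with `F ∈ ℱ` has cokernel in `{}^{⊥₁}C₀ = ℱ`: a lift of the cokernel projection
can be corrected because `E` is injective and `Hom(C₀, C₁) = 0`; so `C₀ ∈ β(ℱ)`. Hence
`P = C₀^{Hom(C₁, C₀)} ∈ ℱ ∩ β(ℱ)`, and the canonical embedding `Δ : C₁ ⟶ P` has cokernel in
`{}^{⊥₁}C₀ = ℱ ⊆ {}^{⊥₁}C₁`, so `Δ` splits. On the other hand minimality of the approximation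
`C₀ ⟶ E` gives `Hom(β(ℱ), C₁) = 0`, so the retraction of `Δ` vanishes and `C₁ = 0`.
-/

namespace Ext1Vanishes

variable {X C : ModuleCat.{u} R}

lemma exists_lift (h : Ext1Vanishes X C) {Z B : ModuleCat.{u} R} {i : C ⟶ Z} {p : Z ⟶ B}
    {w : i ≫ p = 0} (hS : (ShortComplex.mk i p w).ShortExact) (b : X ⟶ B) :
    ∃ a : X ⟶ Z, a ≫ p = b := by
  have := hS.mono_f
  have := hS.epi_g
  let i' : C ⟶ pullback p b := pullback.lift i 0 (by simp [w])
  have hi'₁ : i' ≫ pullback.fst p b = i := pullback.lift_fst _ _ _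
  have hi'₂ : i' ≫ pullback.snd p b = 0 := pullback.lift_snd _ _ _
  have : Mono i' := mono_of_mono_fac hi'₁
  have hexact : (ShortComplex.mk i' (pullback.snd p b) hi'₂).Exact := by
    rw [ShortComplex.exact_iff_exact_up_to_refinements]
    intro T x (hx : x ≫ pullback.snd p b = 0)
    obtain ⟨T', π, hπ, y, hy⟩ := hS.exact.exact_up_to_refinements (x ≫ pullback.fst p b)
      (by simp [pullback.condition, reassoc_of% hx])
    refine ⟨T', π, hπ, y, pullback.hom_ext ?_ ?_⟩
    · simpa [hi'₁] using hy
    · simp [hi'₂, hx]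
  obtain ⟨r, hr⟩ := h i' _ _ ⟨hexact⟩
  obtain ⟨s, hs⟩ : ∃ s, s ≫ pullback.snd p b = 𝟙 X :=
    ⟨_, (ShortComplex.Splitting.ofExactOfRetraction _ hexact r hr inferInstance).s_g⟩
  exact ⟨s ≫ pullback.fst p b, by simp [pullback.condition, reassoc_of% hs]⟩

lemma exists_extension (h : Ext1Vanishes X C) {A Z : ModuleCat.{u} R} {i : A ⟶ Z}
    {p : Z ⟶ X} {w : i ≫ p = 0} (hS : (ShortComplex.mk i p w).ShortExact) (c : A ⟶ C) :
    ∃ e : Z ⟶ C, i ≫ e = c := by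
  have := hS.mono_f
  have := hS.epi_g
  let p' : pushout i c ⟶ X := pushout.desc p 0 (by simp [w])
  have hp'₁ : pushout.inl i c ≫ p' = p := pushout.inl_desc _ _ _
  have hp'₂ : pushout.inr i c ≫ p' = 0 := pushout.inr_desc _ _ _
  have : Epi p' := epi_of_epi_fac hp'₁
  have hexact : (ShortComplex.mk (pushout.inr i c) p' hp'₂).Exact := by
    rw [ShortComplex.exact_iff_exact_up_to_refinements]
    intro T x (hx : x ≫ p' = 0)
    obtain ⟨T₁, π₁, hπ₁, z, y, hzy⟩ :=
      (IsPushout.of_hasPushout i c).hom_eq_add_up_to_refinements x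
    obtain ⟨T₂, π₂, hπ₂, a, ha⟩ := hS.exact.exact_up_to_refinements z (by
      simpa [hx, hp'₁, hp'₂] using hzy.symm =≫ p')
    refine ⟨T₂, π₂ ≫ π₁, epi_comp _ _, a ≫ c + π₂ ≫ y, ?_⟩
    simp only [Category.assoc, hzy, Preadditive.comp_add, Preadditive.add_comp,
      reassoc_of% ha, pushout.condition]
  obtain ⟨r, hr⟩ := h _ _ _ ⟨hexact⟩
  exact ⟨pushout.inl i c ≫ r, by rw [pushout.condition_assoc, hr, Category.comp_id]⟩

lemma of_mem_prodCl (h : Ext1Vanishes X C) {Y : ModuleCat.{u} R} (hY : Y ∈ ProdCl C) :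
    Ext1Vanishes X Y := by
  obtain ⟨s, f, r, hfr⟩ := hY
  intro Z i p w hS
  choose e he using fun t : s => h.exists_extension hS (f ≫ ModuleCat.ofHom (LinearMap.proj t))
  let e' : Z ⟶ ModuleCat.of R (s → C) := ModuleCat.ofHom (LinearMap.pi fun t => (e t).hom)
  have he' : i ≫ e' = f := by
    ext y t
    exact ConcreteCategory.congr_hom (he t) y
  exact ⟨e' ≫ r, by rw [← Category.assoc, he', hfr]⟩

end Ext1Vanishes

/-- A lift `h : F ⟶ Z` of `cokernel.π f` through `0 → C → Z → cokernel f → 0` corrected to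
`h - χ ≫ a` kills `f`, hence descends to a section of `Z ⟶ cokernel f`. -/
lemma ext1Vanishes_cokernel {C M F : ModuleCat.{u} R} (f : M ⟶ F) (hF : Ext1Vanishes F C)
    (hfac : ∀ ⦃Z : ModuleCat.{u} R⦄ (a : C ⟶ Z) [Mono a] (ψ : M ⟶ C) (h : F ⟶ Z),
      f ≫ h = ψ ≫ a → ∃ χ : F ⟶ C, f ≫ χ = ψ) :
    Ext1Vanishes (cokernel f) C := by
  intro Z a p w hS
  have := hS.mono_f
  obtain ⟨h, hh⟩ := hF.exists_lift hS (cokernel.π f)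
  obtain ⟨ψ, hψ⟩ : ∃ ψ, ψ ≫ a = f ≫ h := ⟨_, hS.exact.lift_f (f ≫ h) (by simp [hh])⟩
  obtain ⟨χ, hχ⟩ := hfac a ψ h hψ.symm
  let σ := cokernel.desc f (h - χ ≫ a) (by simp [reassoc_of% hχ, hψ])
  have hσ : σ ≫ p = 𝟙 _ := by
    rw [← cancel_epi (cokernel.π f)]
    simp [σ, hh, w]
  let split := ShortComplex.Splitting.ofExactOfSection _ hS.exact σ hσ hS.mono_f
  exact ⟨split.r, split.f_r⟩

lemma cogen_subset_of_mem_cogen {A B : ModuleCat.{u} R} (hB : B ∈ Cogen A) :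
    Cogen B ⊆ Cogen A := by
  rintro X ⟨s, mX, hmX⟩
  obtain ⟨t, mB, hmB⟩ := hB
  rw [ModuleCat.mono_iff_injective] at hmX hmB
  refine ⟨s × t, ModuleCat.ofHom ((LinearEquiv.curry R A s t).symm.toLinearMap ∘ₗ
    mB.hom.compLeft s ∘ₗ mX.hom), ?_⟩
  rw [ModuleCat.mono_iff_injective]
  exact (LinearEquiv.curry R A s t).symm.injective.comp (hmB.comp_left.comp hmX)

lemma prodCl_subset_cogen (C : ModuleCat.{u} R) : ProdCl C ⊆ Cogen C := by
  rintro X ⟨s, f, r, hfr⟩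
  have : IsSplitMono f := .mk' ⟨r, hfr⟩
  exact ⟨s, f, inferInstance⟩

namespace IsCotilting

variable {C : ModuleCat.{u} R}

lemma mem_cogen_iff (hC : IsCotilting C) {X : ModuleCat.{u} R} :
    X ∈ Cogen C ↔ Ext1Vanishes X C := by
  rw [hC]
  rfl

lemma ext1Vanishes_of_mem_prodCl (hC : IsCotilting C) {X Y : ModuleCat.{u} R}
    (hX : X ∈ Cogen C) (hY : Y ∈ ProdCl C) : Ext1Vanishes X Y :=
  (hC.mem_cogen_iff.mp hX).of_mem_prodCl hY

lemma cogen_eq_of_mem_prodCl (hC : IsCotilting C) {C₀ : ModuleCat.{u} R}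
    (hC₀ : IsCotilting C₀) (h : C₀ ∈ ProdCl C) : Cogen C₀ = Cogen C := by
  refine (cogen_subset_of_mem_cogen (prodCl_subset_cogen C h)).antisymm fun X hX => ?_
  exact hC₀.mem_cogen_iff.mpr (hC.ext1Vanishes_of_mem_prodCl hX h)

end IsCotilting

lemma mono_pi_lift_of_mem_cogen {X A : ModuleCat.{u} R} (hX : X ∈ Cogen A) :
    Mono (Pi.lift fun φ : X ⟶ A => φ) := by
  obtain ⟨s, m, hm⟩ := hX
  refine Preadditive.mono_of_cancel_zero _ fun x hx => ?_
  have : x ≫ m = 0 := by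
    ext y t
    have hxt :=
      ConcreteCategory.congr_hom (hx =≫ Pi.π _ (m ≫ ModuleCat.ofHom (LinearMap.proj t))) y
    simp only [Category.assoc, Limits.Pi.lift_π, zero_comp] at hxt
    exact hxt
  exact zero_of_comp_mono m this

lemma hom_eq_zero_of_mem_beta {ℱ : Set (ModuleCat.{u} R)} {C₀ C₁ E P : ModuleCat.{u} R}
    {g : C₀ ⟶ E} (hC₀ : C₀ ∈ ℱ) (happrox : ∀ F ∈ ℱ, ∀ f : F ⟶ E, ∃ h : F ⟶ C₀, h ≫ g = f)
    (hmin : ∀ s : C₀ ⟶ C₀, s ≫ g = g → IsIso s) {j : C₁ ⟶ C₀} [Mono j] (hw : j ≫ g = 0)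
    (hP : P ∈ Beta ℱ) (u : P ⟶ C₁) : u = 0 := by
  obtain ⟨l, hl⟩ := happrox _ (hP hC₀ (u ≫ j)) (cokernel.desc (u ≫ j) g (by simp [hw]))
  have : IsIso (cokernel.π (u ≫ j) ≫ l) := hmin _ (by simp [hl])
  have : Mono (cokernel.π (u ≫ j)) := mono_of_mono _ l
  rw [← cancel_mono j, ← cancel_mono (cokernel.π (u ≫ j))]
  simp

lemma mem_beta_cogen_of_hom_eq_zero {C₀ C₁ E : ModuleCat.{u} R} [Injective E]
    (hC₀ : IsCotilting C₀) {g : C₀ ⟶ E}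
    (happrox : ∀ F ∈ Cogen C₀, ∀ f : F ⟶ E, ∃ h : F ⟶ C₀, h ≫ g = f)
    {j : C₁ ⟶ C₀} [Mono j] {hw : j ≫ g = 0} (hker : (ShortComplex.mk j g hw).Exact)
    (hhom : ∀ f : C₀ ⟶ C₁, f = 0) : C₀ ∈ Beta (Cogen C₀) := by
  intro F hF f
  refine hC₀.mem_cogen_iff.mpr <| ext1Vanishes_cokernel f (hC₀.mem_cogen_iff.mp hF)
    fun Z a _ ψ h hfh => ?_
  obtain ⟨χ, hχ⟩ := happrox F hF (h ≫ Injective.factorThru g a)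
  have hδ : (ψ - f ≫ χ) ≫ g = 0 := by
    simp [Preadditive.sub_comp, hχ, reassoc_of% hfh]
  refine ⟨χ, (sub_eq_zero.mp ?_).symm⟩
  rw [← hker.lift_f _ hδ, hhom (hker.lift _ hδ), zero_comp]

theorem C1_eq_zero_of_minimal_general
    (C E C₀ C₁ : ModuleCat.{u} R)
    (hC : IsCotilting C) (hE : IsInjectiveCogenerator E)
    (g : C₀ ⟶ E)
    (happrox : ∀ F ∈ Cogen C, ∀ f : F ⟶ E, ∃ h : F ⟶ C₀, h ≫ g = f)
    (hmin : ∀ s : C₀ ⟶ C₀, s ≫ g = g → IsIso s)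
    (j : C₁ ⟶ C₀) (hj : Mono j) (hw : j ≫ g = 0)
    (hker : (ShortComplex.mk j g hw).Exact)
    (hC₀ : C₀ ∈ ProdCl C) (hC₁ : C₁ ∈ ProdCl C)
    (hC₀cotilt : IsCotilting C₀)
    -- `C` is a minimal cosilting module:
    (hprod : ∀ (s : Type u) (X : s → ModuleCat.{u} R),
      (∀ i, X i ∈ Cogen C ∩ Beta (Cogen C)) →
        (∏ᶜ X) ∈ Cogen C ∩ Beta (Cogen C))
    (hhom : ∀ f : C₀ ⟶ C₁, f = 0) :
    Limits.IsZero C₁ := by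
  have : Injective E := hE.1
  have hcog : Cogen C₀ = Cogen C := hC.cogen_eq_of_mem_prodCl hC₀cotilt hC₀
  have hC₀F : C₀ ∈ Cogen C := prodCl_subset_cogen C hC₀
  have hβ : C₀ ∈ Beta (Cogen C) := by
    rw [← hcog]
    exact mem_beta_cogen_of_hom_eq_zero hC₀cotilt (hcog ▸ happrox) hker hhom
  obtain ⟨hPcog, hPβ⟩ := hprod (C₁ ⟶ C₀) (fun _ => C₀) fun _ => ⟨hC₀F, hβ⟩
  let Δ : C₁ ⟶ ∏ᶜ fun _ : C₁ ⟶ C₀ => C₀ := Pi.lift fun φ => φ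
  have : Mono Δ := mono_pi_lift_of_mem_cogen (hcog ▸ prodCl_subset_cogen C hC₁)
  have hD : cokernel Δ ∈ Cogen C := by
    rw [← hcog, hC₀cotilt.mem_cogen_iff]
    exact ext1Vanishes_cokernel Δ (hC₀cotilt.mem_cogen_iff.mp (hcog ▸ hPcog))
      fun _ _ _ ψ _ _ => ⟨Pi.π _ ψ, Pi.lift_π _ _⟩
  obtain ⟨τ, hτ⟩ := hC.ext1Vanishes_of_mem_prodCl hD hC₁ Δ (cokernel.π Δ)
    (cokernel.condition Δ) ⟨ShortComplex.exact_of_g_is_cokernel _ (cokernelIsCokernel Δ)⟩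
  rw [IsZero.iff_id_eq_zero, ← hτ, hom_eq_zero_of_mem_beta hC₀F happrox hmin hw hPβ τ,
    comp_zero]

/-- Let `C` be a cotilting module with minimal approximation sequence
`0 → C₁ → C₀ → E → 0` of an injective cogenerator `E`, with `C₀, C₁ ∈ Prod C`.
If `C₀` is cotilting and `C` is a minimal cosilting module (i.e. `beta (Cogen C)` is
closed under products and `Hom(C₀, C₁) = 0`), then `C₁ = 0`. -/
theorem C1_eq_zero_of_minimal
    (C E C₀ C₁ : ModuleCat.{u} R)
    (hC : IsCotilting C) (hE : IsInjectiveCogenerator E)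
    (g : C₀ ⟶ E) (hgepi : Epi g) (hC₀F : C₀ ∈ Cogen C)
    (happrox : ∀ F ∈ Cogen C, ∀ f : F ⟶ E, ∃ h : F ⟶ C₀, h ≫ g = f)
    (hmin : ∀ s : C₀ ⟶ C₀, s ≫ g = g → IsIso s)
    (j : C₁ ⟶ C₀) (hj : Mono j) (hw : j ≫ g = 0)
    (hker : (ShortComplex.mk j g hw).Exact)
    (hC₀ : C₀ ∈ ProdCl C) (hC₁ : C₁ ∈ ProdCl C)
    (hC₀cotilt : IsCotilting C₀)
    -- `C` is a minimal cosilting module: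
    (hprod : ∀ (s : Type u) (X : s → ModuleCat.{u} R),
      (∀ i, X i ∈ Cogen C ∩ Beta (Cogen C)) →
        (∏ᶜ X) ∈ Cogen C ∩ Beta (Cogen C))
    (hhom : ∀ f : C₀ ⟶ C₁, f = 0) :
    Limits.IsZero C₁ :=
  C1_eq_zero_of_minimal_general C E C₀ C₁ hC hE g happrox hmin j hj hw hker hC₀ hC₁ hC₀cotilt hprod
    hhom
end
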